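/- arXiv:1801.00222 — 4 statements merged into one kernel-verified Lean document; each statement's English description precedes it below -/
import Mathlib

section
/- Let α > 2 be real, let 0 < τ < 1, and let N be a positive integer. Then 1 + 2·∫_{1}^{∞} x · (1 − (1 + τ·x^{−α})^{−N}) dx = ∑_{k=0}^{∞} [ (N)_k · (−2/α)_k / ( (1 − 2/α)_k · k! ) ] · (−τ)^k, where (a)_k = a(a+1)⋯(a+k−1) denotes the rising (Pochhammer) factorial; in particular the series on the right converges. -/
/-!
Put `u = τ x^(-α)`, so `0 < u < 1` on `(1, ∞)`. The binomial series
`(1 + u)^(-N) = ∑ₖ C(k + N - 1, N - 1) (-u)^k` turns the integrand into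
`-∑_{k ≥ 1} C(k + N - 1, N - 1) (-τ)^k x^(1 - αk)`. Since `∫_1^∞ x^(1 - αk) dx = 1/(αk - 2)`
and the absolute integrals are summable, the integral is
`∑_{k ≥ 1} C(k + N - 1, N - 1) (-τ)^k / (2 - αk)`.
On the hypergeometric side `(N)_k / k! = C(k + N - 1, N - 1)`, and with `b = -2/α` the identity
`(b)_k (b + k) = b (b + 1)_k` gives `(b)_k / (1 + b)_k = b / (b + k) = 2 / (2 - αk)`, which is
`1` at `k = 0` and accounts for the factor `2` elsewhere.
-/

open MeasureTheory Set

open Polynomial in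
theorem ascPochhammer_eval_mul_add_natCast {R : Type*} [CommSemiring R] (x : R) (k : ℕ) :
    (ascPochhammer R k).eval x * (x + k) = x * (ascPochhammer R k).eval (x + 1) := by
  rw [← ascPochhammer_succ_eval, ascPochhammer_succ_left, eval_mul, eval_X, eval_comp, eval_add,
    eval_X, eval_one]

theorem ascPochhammer_eval_div_eval_add_one {K : Type*} [Field K] {x : K} {k : ℕ}
    (h₁ : (ascPochhammer K k).eval (x + 1) ≠ 0) (h₂ : x + k ≠ 0) :
    (ascPochhammer K k).eval x / (ascPochhammer K k).eval (x + 1) = x / (x + k) := by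
  rw [div_eq_div_iff h₁ h₂, ascPochhammer_eval_mul_add_natCast]

theorem ascPochhammer_eval_natCast_add_one (R : Type*) [Semiring R] (M k : ℕ) :
    (ascPochhammer R k).eval ((M + 1 : ℕ) : R) = (k.factorial * (k + M).choose M : ℕ) := by
  rw [ascPochhammer_nat_eq_natCast_ascFactorial, Nat.ascFactorial_eq_factorial_mul_choose,
    Nat.add_comm M k, Nat.choose_symm_add]

theorem hypergeom_term_eq_choose_mul {α : ℝ} (hα : 2 < α) (M k : ℕ) (z : ℝ) :
    (ascPochhammer ℝ k).eval ((M + 1 : ℕ) : ℝ) * (ascPochhammer ℝ k).eval (-2 / α) /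
        ((ascPochhammer ℝ k).eval (1 - 2 / α) * k.factorial) * z ^ k =
      (k + M).choose M * z ^ k * (2 / (2 - α * k)) := by
  set b := -2 / α with hb
  have hα₀ : 0 < α := by linarith
  have hb₀ : b < 0 := div_neg_of_neg_of_pos (by norm_num) hα₀
  have hb₁ : 0 < b + 1 := by
    have : 2 / α < 1 := (div_lt_one hα₀).2 hα
    rw [hb, neg_div]; linarith
  have hbk : b + k ≠ 0 := by
    rcases k.eq_zero_or_pos with rfl | hk
    · simpa using hb₀.ne
    · have : (1 : ℝ) ≤ k := by exact_mod_cast hk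
      linarith
  have hratio : b / (b + k) = 2 / (2 - α * k) := by
    have hαbk : 2 - α * k = -(α * (b + k)) := by rw [hb]; field_simp; ring
    rw [hαbk, div_neg, ← neg_div, div_div]
  have hpoch := ascPochhammer_eval_div_eval_add_one (ascPochhammer_pos k _ hb₁).ne' hbk
  rw [show 1 - 2 / α = b + 1 by rw [hb]; ring, ascPochhammer_eval_natCast_add_one, ← hratio,
    ← hpoch]
  have : (k.factorial : ℝ) ≠ 0 := by positivity
  push_cast
  field_simp

theorem hasSum_one_sub_inv_one_add_pow {𝕜 : Type*} [NormedDivisionRing 𝕜] (M : ℕ) {u : 𝕜}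
    (hu : ‖u‖ < 1) :
    HasSum (fun k ↦ -((k + 1 + M).choose M * (-u) ^ (k + 1))) (1 - ((1 + u) ^ (M + 1))⁻¹) := by
  have h := (hasSum_choose_mul_geometric_of_norm_lt_one M (r := -u) (by rwa [norm_neg])).neg
  rw [← hasSum_nat_add_iff' 1] at h
  simpa [sub_eq_add_neg, add_comm] using h

theorem Real.mul_rpow_neg_pow {x : ℝ} (hx : 0 < x) (α : ℝ) (k : ℕ) :
    x * (x ^ (-α)) ^ k = x ^ (1 - α * k) := by
  rw [← Real.rpow_mul_natCast hx.le, sub_eq_add_neg, Real.rpow_add hx, Real.rpow_one, neg_mul]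

/-- The `k`-th term of the expansion of `x (1 - (1 + τ x^(-α))^(-(M + 1)))`, for `k ≥ 1`. -/
noncomputable def interferenceTerm (α τ : ℝ) (M k : ℕ) (x : ℝ) : ℝ :=
  -((k + M).choose M * (-τ) ^ k) * x ^ (1 - α * k)

section interferenceTerm

variable {α τ : ℝ} {M k : ℕ}

theorem two_lt_mul_natCast_add_one (hα : 2 < α) (k : ℕ) : 2 < α * (k + 1 : ℕ) := by
  push_cast; nlinarith [(k.cast_nonneg : (0 : ℝ) ≤ k)]

theorem hasSum_interferenceTerm (hα : 0 ≤ α) (hτ : |τ| < 1) {x : ℝ} (hx : 1 ≤ x) :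
    HasSum (fun k ↦ interferenceTerm α τ M (k + 1) x)
      (x * (1 - ((1 + τ * x ^ (-α)) ^ (M + 1))⁻¹)) := by
  have hx₀ : 0 < x := zero_lt_one.trans_le hx
  have hu : ‖τ * x ^ (-α)‖ < 1 := by
    rw [norm_mul, Real.norm_of_nonneg (Real.rpow_nonneg hx₀.le _)]
    exact mul_lt_one_of_nonneg_of_lt_one_left (abs_nonneg τ) hτ
      (Real.rpow_le_one_of_one_le_of_nonpos hx (neg_nonpos.2 hα))
  refine ((hasSum_one_sub_inv_one_add_pow M hu).mul_left x).congr_fun fun k ↦ ?_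
  rw [interferenceTerm, ← Real.mul_rpow_neg_pow hx₀, ← neg_mul τ, mul_pow]
  ring

theorem integral_interferenceTerm (h : 2 < α * k) :
    ∫ x in Ioi 1, interferenceTerm α τ M k x = (k + M).choose M * (-τ) ^ k / (2 - α * k) := by
  simp only [interferenceTerm]
  rw [integral_const_mul, integral_Ioi_rpow_of_lt (by linarith) one_pos, Real.one_rpow,
    show 1 - α * k + 1 = 2 - α * k by ring]
  ring

theorem integrableOn_interferenceTerm (h : 2 < α * k) :
    IntegrableOn (interferenceTerm α τ M k) (Ioi 1) :=
  (integrableOn_Ioi_rpow_of_lt (by linarith) one_pos).const_mul _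

theorem integral_norm_interferenceTerm (h : 2 < α * k) :
    ∫ x in Ioi 1, ‖interferenceTerm α τ M k x‖ =
      (k + M).choose M * |τ| ^ k / (α * k - 2) := by
  have hnorm : EqOn (fun x ↦ ‖interferenceTerm α τ M k x‖)
      (fun x ↦ (k + M).choose M * |τ| ^ k * x ^ (1 - α * k)) (Ioi 1) := fun x hx ↦ by
    simp [interferenceTerm, abs_of_pos (Real.rpow_pos_of_pos (zero_lt_one.trans hx) _)]
  rw [setIntegral_congr_fun measurableSet_Ioi hnorm, integral_const_mul,
    integral_Ioi_rpow_of_lt (by linarith) one_pos, Real.one_rpow,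
    show 1 - α * k + 1 = -(α * k - 2) by ring, div_neg, neg_div, neg_neg, mul_one_div]

theorem summable_integral_norm_interferenceTerm (hα : 2 < α) (hτ : |τ| < 1) :
    Summable fun k : ℕ ↦ ∫ x in Ioi 1, ‖interferenceTerm α τ M (k + 1) x‖ := by
  have hgeom := (summable_nat_add_iff 1).2 <|
    summable_choose_mul_geometric_of_norm_lt_one M (r := |τ|) (by rwa [Real.norm_eq_abs, abs_abs])
  refine (hgeom.div_const (α - 2)).of_nonneg_of_le
    (fun k ↦ integral_nonneg fun x ↦ norm_nonneg _) fun k ↦ ?_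
  have hk : α - 2 ≤ α * (k + 1 : ℕ) - 2 := by
    push_cast; nlinarith [(k.cast_nonneg : (0 : ℝ) ≤ k)]
  rw [integral_norm_interferenceTerm (two_lt_mul_natCast_add_one hα k)]
  gcongr

theorem hasSum_integral_interferenceTerm (hα : 2 < α) (hτ : |τ| < 1) :
    HasSum (fun k ↦ ∫ x in Ioi 1, interferenceTerm α τ M (k + 1) x)
      (∫ x in Ioi 1, x * (1 - ((1 + τ * x ^ (-α)) ^ (M + 1))⁻¹)) := by
  have hsum := hasSum_integral_of_summable_integral_norm
    (F := fun k ↦ interferenceTerm α τ M (k + 1))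
    (fun k ↦ integrableOn_interferenceTerm (two_lt_mul_natCast_add_one hα k))
    (summable_integral_norm_interferenceTerm hα hτ)
  rwa [setIntegral_congr_fun measurableSet_Ioi fun x (hx : 1 < x) ↦
    (hasSum_interferenceTerm (by linarith) hτ hx.le).tsum_eq] at hsum

end interferenceTerm

/-- For real `α > 2`, `0 < τ < 1` and a positive integer `N`, the
interference functional `1 + 2 ∫_{1}^{∞} x (1 − (1 + τ x^{−α})^{−N}) dx` equals the
Gaussian hypergeometric series `∑_{k≥0} (N)_k (−2/α)_k (−τ)^k / ((1 − 2/α)_k k!)`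
(in particular that series converges). -/
theorem interference_integral_eq_hypergeom_series
    (α τ : ℝ) (hα : 2 < α) (hτ0 : 0 < τ) (hτ1 : τ < 1) (N : ℕ) (hN : 0 < N) :
    Summable (fun k : ℕ =>
      (ascPochhammer ℝ k).eval (N : ℝ) * (ascPochhammer ℝ k).eval (-2 / α) /
        ((ascPochhammer ℝ k).eval (1 - 2 / α) * (Nat.factorial k)) * (-τ) ^ k) ∧
    1 + 2 * (∫ x in Ioi (1 : ℝ), x * (1 - ((1 + τ * x ^ (-α)) ^ N)⁻¹)) =
      ∑' k : ℕ,
        (ascPochhammer ℝ k).eval (N : ℝ) * (ascPochhammer ℝ k).eval (-2 / α) /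
          ((ascPochhammer ℝ k).eval (1 - 2 / α) * (Nat.factorial k)) * (-τ) ^ k := by
  obtain ⟨M, rfl⟩ : ∃ M, N = M + 1 := ⟨N - 1, by omega⟩
  have hτ : |τ| < 1 := by rwa [abs_of_pos hτ0]
  simp only [hypergeom_term_eq_choose_mul hα]
  set I := ∫ x in Ioi (1 : ℝ), x * (1 - ((1 + τ * x ^ (-α)) ^ (M + 1))⁻¹)
  let g : ℕ → ℝ := fun k ↦ (k + M).choose M * (-τ) ^ k * (2 / (2 - α * k))
  have htail : HasSum (fun k ↦ g (k + 1)) (2 * I) := by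
    refine ((hasSum_integral_interferenceTerm hα hτ).mul_left 2).congr_fun fun k ↦ ?_
    rw [integral_interferenceTerm (two_lt_mul_natCast_add_one hα k)]
    ring
  have hseries : HasSum g (1 + 2 * I) := by
    simpa [g] using htail.zero_add
  exact ⟨hseries.summable, hseries.tsum_eq.symm⟩
end

section
/- Let b and c be real numbers with −1 < b < 0 and c > 0, and let z be real with −1 < z < 0. For each positive integer N define F(N) = ∑_{k=0}^{∞} (N)_k · (b)_k · z^k / ( (c)_k · k! ), where (a)_k is the rising (Pochhammer) factorial. Then F(N+1) > F(N) for every positive integer N; that is, N ↦ F(N) is strictly increasing. -/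
/-!
Since `₂F₁(N+1, b; c; z) - ₂F₁(N, b; c; z) = (bz/c) · ₂F₁(N+1, b+1; c+1; z)` with `bz/c > 0`,
it suffices that `₂F₁(M, β; γ; z) > 0` for natural `M`, `|β| ≤ 1`, `γ ≥ 1` and `-1 < z ≤ 0`.
This goes by induction on `M` through the contiguous relation
`(1 - z) ₂F₁(M+1, β; γ; z) = ₂F₁(M, β; γ; z) + (γ - β)/γ · (-z) · ₂F₁(M+1, β; γ+1; z)`,
whose coefficients are nonnegative: it carries positivity from `γ + 1` down to `γ`, and for
large `γ` the series is positive because it differs from its leading term `1` by at most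
`(₂F₁(M, 1; 1; |z|) - 1) / γ`.
-/

/-- The Gaussian hypergeometric series `₂F₁(N, b, c, z)` with first argument a natural
number `N`, as a sum over `k` of `(N)_k (b)_k z^k / ((c)_k k!)`. -/
noncomputable def hypergeomF (N : ℕ) (b c z : ℝ) : ℝ :=
  ∑' k : ℕ,
    (ascPochhammer ℝ k).eval (N : ℝ) * (ascPochhammer ℝ k).eval b * z ^ k /
      ((ascPochhammer ℝ k).eval c * (Nat.factorial k))

open Filter Topology Polynomial

theorem ascPochhammer_eval_succ_left {S : Type*} [CommSemiring S] (x : S) (k : ℕ) :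
    (ascPochhammer S (k + 1)).eval x = x * (ascPochhammer S k).eval (x + 1) := by
  simp [ascPochhammer_succ_left, eval_comp]

section Pochhammer

variable {R : Type*} [CommRing R] [LinearOrder R] [IsStrictOrderedRing R]

theorem ascPochhammer_eval_nonneg {x : R} (hx : 0 ≤ x) (k : ℕ) :
    0 ≤ (ascPochhammer R k).eval x := by
  induction k with
  | zero => simp
  | succ k ih => rw [ascPochhammer_succ_eval]; exact mul_nonneg ih (by positivity)

theorem ascPochhammer_eval_le_of_le {x y : R} (hx : 0 ≤ x) (hxy : x ≤ y) (k : ℕ) :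
    (ascPochhammer R k).eval x ≤ (ascPochhammer R k).eval y := by
  induction k with
  | zero => simp
  | succ k ih =>
    rw [ascPochhammer_succ_eval, ascPochhammer_succ_eval]
    exact mul_le_mul ih (by gcongr) (by positivity)
      (ascPochhammer_eval_nonneg (hx.trans hxy) k)

theorem abs_ascPochhammer_eval_le (x : R) (k : ℕ) :
    |(ascPochhammer R k).eval x| ≤ (ascPochhammer R k).eval |x| := by
  induction k with
  | zero => simp
  | succ k ih =>
    rw [ascPochhammer_succ_eval, ascPochhammer_succ_eval, abs_mul]
    exact mul_le_mul ih ((abs_add_le _ _).trans (by simp)) (abs_nonneg _)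
      (ascPochhammer_eval_nonneg (abs_nonneg x) k)

end Pochhammer

noncomputable def hypergeomTerm (a b c z : ℝ) (k : ℕ) : ℝ :=
  ordinaryHypergeometricCoefficient a b c k * z ^ k

section Term

variable (a b c : ℝ)

theorem ordinaryHypergeometric_eq_tsum_hypergeomTerm (z : ℝ) :
    ₂F₁ a b c z = ∑' k, hypergeomTerm a b c z k := by
  simp only [ordinaryHypergeometric_sum_eq, ordinaryHypergeometric, smul_eq_mul, hypergeomTerm]

@[simp]
theorem hypergeomTerm_zero (z : ℝ) : hypergeomTerm a b c z 0 = 1 := by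
  simp [hypergeomTerm, ordinaryHypergeometricCoefficient]

theorem hypergeomTerm_succ (z : ℝ) (k : ℕ) :
    hypergeomTerm a b c z (k + 1) =
      hypergeomTerm a b c z k * ((a + k) * (b + k) * z / ((c + k) * (k + 1))) := by
  simp only [hypergeomTerm, ordinaryHypergeometricCoefficient, ascPochhammer_succ_eval,
    Nat.factorial_succ, pow_succ, Nat.cast_mul, Nat.cast_succ, mul_inv, div_eq_mul_inv]
  ring

theorem summable_hypergeomTerm {z : ℝ} (hz : |z| < 1) : Summable (hypergeomTerm a b c z) := by
  obtain ⟨r, hzr, hr1⟩ := exists_between hz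
  have hratio : Tendsto (fun k : ℕ ↦ (a + k) * (b + k) * z / ((c + k) * (k + 1))) atTop (𝓝 z) := by
    have ha := tendsto_add_mul_div_add_mul_atTop_nhds a c (1 : ℝ) one_ne_zero
    have hb := tendsto_add_mul_div_add_mul_atTop_nhds b 1 (1 : ℝ) one_ne_zero
    have h := (ha.mul hb).mul_const z
    simp only [one_mul, div_one] at h
    refine h.congr fun k ↦ ?_
    rw [add_comm 1, div_mul_div_comm, div_mul_eq_mul_div]
  refine summable_of_ratio_norm_eventually_le hr1 ?_
  filter_upwards [hratio.abs.eventually (gt_mem_nhds hzr)] with k hk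
  rw [hypergeomTerm_succ, norm_mul, Real.norm_eq_abs (_ / _), mul_comm r]
  exact mul_le_mul_of_nonneg_left hk.le (norm_nonneg _)

end Term

section Majorant

variable {a b c : ℝ}

theorem mul_abs_hypergeomTerm_succ_le (ha : 0 ≤ a) (hb : |b| ≤ 1) (hc : 1 ≤ c) (z : ℝ) (k : ℕ) :
    c * |hypergeomTerm a b c z (k + 1)| ≤ hypergeomTerm a 1 1 |z| (k + 1) := by
  have hc0 : 0 < c := zero_lt_one.trans_le hc
  have hcb : c * |(ascPochhammer ℝ (k + 1)).eval b| ≤ (ascPochhammer ℝ (k + 1)).eval c := by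
    rw [ascPochhammer_eval_succ_left c]
    gcongr
    calc |(ascPochhammer ℝ (k + 1)).eval b|
        ≤ (ascPochhammer ℝ (k + 1)).eval |b| := abs_ascPochhammer_eval_le b _
      _ ≤ (ascPochhammer ℝ (k + 1)).eval 1 := ascPochhammer_eval_le_of_le (abs_nonneg b) hb _
      _ = (ascPochhammer ℝ k).eval 2 := by rw [ascPochhammer_eval_succ_left, one_mul]; norm_num
      _ ≤ (ascPochhammer ℝ k).eval (c + 1) :=
        ascPochhammer_eval_le_of_le zero_le_two (by linarith) _
  have hX : 0 ≤ ((k + 1).factorial : ℝ)⁻¹ * (ascPochhammer ℝ (k + 1)).eval a * |z| ^ (k + 1) := by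
    have := ascPochhammer_eval_nonneg ha (k + 1)
    positivity
  have hP := ascPochhammer_pos (k + 1) c hc0
  calc c * |hypergeomTerm a b c z (k + 1)|
      = ((k + 1).factorial : ℝ)⁻¹ * (ascPochhammer ℝ (k + 1)).eval a * |z| ^ (k + 1) *
          (c * |(ascPochhammer ℝ (k + 1)).eval b| / (ascPochhammer ℝ (k + 1)).eval c) := by
        simp only [hypergeomTerm, ordinaryHypergeometricCoefficient, abs_mul, abs_inv, abs_pow,
          abs_of_nonneg (ascPochhammer_eval_nonneg ha _), abs_of_pos hP, Nat.abs_cast]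
        ring
    _ ≤ ((k + 1).factorial : ℝ)⁻¹ * (ascPochhammer ℝ (k + 1)).eval a * |z| ^ (k + 1) * 1 := by
        gcongr
        exact div_le_one_of_le₀ hcb hP.le
    _ = hypergeomTerm a 1 1 |z| (k + 1) := by
        simp only [hypergeomTerm, ordinaryHypergeometricCoefficient, ascPochhammer_eval_one]
        field_simp

theorem mul_abs_ordinaryHypergeometric_sub_one_le (ha : 0 ≤ a) (hb : |b| ≤ 1) (hc : 1 ≤ c)
    {z : ℝ} (hz : |z| < 1) : c * |₂F₁ a b c z - 1| ≤ ₂F₁ a 1 1 |z| - 1 := by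
  have hs := summable_hypergeomTerm a b c hz
  have hm := summable_hypergeomTerm a 1 1 (z := |z|) (by rwa [abs_abs])
  have hs' := (summable_nat_add_iff 1).2 hs
  rw [ordinaryHypergeometric_eq_tsum_hypergeomTerm, ordinaryHypergeometric_eq_tsum_hypergeomTerm,
    hs.tsum_eq_zero_add, hm.tsum_eq_zero_add, hypergeomTerm_zero, hypergeomTerm_zero,
    add_sub_cancel_left, add_sub_cancel_left, ← Real.norm_eq_abs]
  calc c * ‖∑' k, hypergeomTerm a b c z (k + 1)‖
      ≤ c * ∑' k, |hypergeomTerm a b c z (k + 1)| := by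
        gcongr
        exact norm_tsum_le_tsum_norm hs'.norm
    _ = ∑' k, c * |hypergeomTerm a b c z (k + 1)| := tsum_mul_left.symm
    _ ≤ ∑' k, hypergeomTerm a 1 1 |z| (k + 1) :=
        (hs'.abs.mul_left c).tsum_le_tsum (mul_abs_hypergeomTerm_succ_le ha hb hc z)
          ((summable_nat_add_iff 1).2 hm)

theorem eventually_ordinaryHypergeometric_pos (ha : 0 ≤ a) (hb : |b| ≤ 1) {z : ℝ} (hz : |z| < 1) :
    ∀ᶠ c in atTop, 0 < ₂F₁ a b c z := by
  filter_upwards [eventually_ge_atTop 1, eventually_gt_atTop (₂F₁ a 1 1 |z| - 1)] with c hc hcF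
  have hlt : |₂F₁ a b c z - 1| < 1 := by
    rw [← mul_lt_iff_lt_one_right (zero_lt_one.trans_le hc)]
    exact (mul_abs_ordinaryHypergeometric_sub_one_le ha hb hc hz).trans_lt hcF
  linarith [neg_abs_le (₂F₁ a b c z - 1)]

end Majorant

section Contiguous

variable (a b : ℝ) {c : ℝ}

theorem hypergeomTerm_add_one_succ_sub (z : ℝ) (k : ℕ) :
    hypergeomTerm (a + 1) b c z (k + 1) - hypergeomTerm a b c z (k + 1) =
      b * z / c * hypergeomTerm (a + 1) (b + 1) (c + 1) z k := by
  simp only [hypergeomTerm, ordinaryHypergeometricCoefficient]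
  rw [ascPochhammer_succ_eval k (a + 1), ascPochhammer_eval_succ_left a,
    ascPochhammer_eval_succ_left b, ascPochhammer_eval_succ_left c]
  simp only [Nat.factorial_succ, pow_succ, Nat.cast_mul, Nat.cast_succ, mul_inv]
  field_simp
  ring

theorem hypergeomTerm_add_one_succ_sub_mul (z : ℝ) (hc : 0 < c) (k : ℕ) :
    hypergeomTerm (a + 1) b c z (k + 1) - z * hypergeomTerm (a + 1) b c z k =
      hypergeomTerm a b c z (k + 1) + (c - b) / c * (-z) * hypergeomTerm (a + 1) b (c + 1) z k := by
  have hck : c * (ascPochhammer ℝ k).eval (c + 1) = (ascPochhammer ℝ k).eval c * (c + k) := by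
    rw [← ascPochhammer_eval_succ_left, ascPochhammer_succ_eval]
  have hPc := (ascPochhammer_pos k c hc).ne'
  have hck' : c + k ≠ 0 := by positivity
  have hPc1 : (ascPochhammer ℝ k).eval (c + 1) = (ascPochhammer ℝ k).eval c * (c + k) / c := by
    rw [eq_div_iff hc.ne', mul_comm, hck]
  simp only [hypergeomTerm, ordinaryHypergeometricCoefficient]
  rw [ascPochhammer_eval_succ_left a, hPc1]
  simp only [ascPochhammer_succ_eval, Nat.factorial_succ, pow_succ, Nat.cast_mul, Nat.cast_succ]
  field_simp
  ring

theorem ordinaryHypergeometric_add_one_sub {z : ℝ} (hz : |z| < 1) :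
    ₂F₁ (a + 1) b c z - ₂F₁ a b c z = b * z / c * ₂F₁ (a + 1) (b + 1) (c + 1) z := by
  have hs := (summable_hypergeomTerm (a + 1) b c hz).sub (summable_hypergeomTerm a b c hz)
  simp only [ordinaryHypergeometric_eq_tsum_hypergeomTerm]
  rw [← (summable_hypergeomTerm (a + 1) b c hz).tsum_sub (summable_hypergeomTerm a b c hz),
    hs.tsum_eq_zero_add]
  simp only [hypergeomTerm_zero, sub_self, zero_add, hypergeomTerm_add_one_succ_sub,
    tsum_mul_left]

theorem one_sub_mul_ordinaryHypergeometric_add_one {z : ℝ} (hz : |z| < 1) (hc : 0 < c) :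
    (1 - z) * ₂F₁ (a + 1) b c z = ₂F₁ a b c z + (c - b) / c * (-z) * ₂F₁ (a + 1) b (c + 1) z := by
  have s₁ := summable_hypergeomTerm (a + 1) b c hz
  have s₀ := summable_hypergeomTerm a b c hz
  have s₂ := summable_hypergeomTerm (a + 1) b (c + 1) hz
  simp only [ordinaryHypergeometric_eq_tsum_hypergeomTerm]
  calc (1 - z) * ∑' k, hypergeomTerm (a + 1) b c z k
      = 1 + ∑' k, (hypergeomTerm (a + 1) b c z (k + 1) - z * hypergeomTerm (a + 1) b c z k) := by
        rw [((summable_nat_add_iff 1).2 s₁).tsum_sub (s₁.mul_left z), tsum_mul_left,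
          s₁.tsum_eq_zero_add, hypergeomTerm_zero]
        ring
    _ = 1 + ∑' k, (hypergeomTerm a b c z (k + 1) +
          (c - b) / c * (-z) * hypergeomTerm (a + 1) b (c + 1) z k) := by
        simp only [hypergeomTerm_add_one_succ_sub_mul a b z hc]
    _ = _ := by
        rw [((summable_nat_add_iff 1).2 s₀).tsum_add (s₂.mul_left _), tsum_mul_left,
          s₀.tsum_eq_zero_add, hypergeomTerm_zero]
        ring

end Contiguous

theorem ordinaryHypergeometric_zero_left (b c z : ℝ) : ₂F₁ 0 b c z = 1 := by
  rw [ordinaryHypergeometric_eq_tsum_hypergeomTerm, tsum_eq_single 0 fun k hk ↦ ?_,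
    hypergeomTerm_zero]
  simp [hypergeomTerm, hk]

theorem forall_ge_of_eventually_of_add_one_imp {P : ℝ → Prop} {x₀ : ℝ}
    (hlarge : ∀ᶠ x in atTop, P x) (hstep : ∀ x ≥ x₀, P (x + 1) → P x) : ∀ x ≥ x₀, P x := by
  obtain ⟨S, hS⟩ := eventually_atTop.1 hlarge
  suffices ∀ n : ℕ, ∀ x ≥ x₀, S ≤ x + n → P x by
    intro x hx
    obtain ⟨n, hn⟩ := exists_nat_ge (S - x)
    exact this n x hx (by linarith)
  intro n
  induction n with
  | zero => exact fun x _ hx ↦ hS x (by simpa using hx)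
  | succ n ih =>
    intro x hx hxn
    exact hstep x hx (ih (x + 1) (by linarith) (by push_cast at hxn; linarith))

theorem ordinaryHypergeometric_natCast_pos {b z : ℝ} (hb : |b| ≤ 1) (hz₀ : -1 < z) (hz₁ : z ≤ 0)
    (M : ℕ) : ∀ c ≥ 1, 0 < ₂F₁ (M : ℝ) b c z := by
  have hz : |z| < 1 := abs_lt.2 ⟨hz₀, by linarith⟩
  induction M with
  | zero => simp [ordinaryHypergeometric_zero_left]
  | succ M ih =>
    push_cast
    refine forall_ge_of_eventually_of_add_one_imp
      (eventually_ordinaryHypergeometric_pos (by positivity) hb hz) fun c hc hpos ↦ ?_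
    have hcoef : 0 ≤ (c - b) / c * (-z) :=
      mul_nonneg (div_nonneg (by linarith [le_abs_self b]) (by linarith)) (by linarith)
    have hmul : 0 < (1 - z) * ₂F₁ ((M : ℝ) + 1) b c z := by
      rw [one_sub_mul_ordinaryHypergeometric_add_one M b hz (by linarith)]
      exact add_pos_of_pos_of_nonneg (ih c hc) (mul_nonneg hcoef hpos.le)
    exact pos_of_mul_pos_right hmul (by linarith)

theorem hypergeomF_eq_ordinaryHypergeometric (N : ℕ) (b c z : ℝ) :
    hypergeomF N b c z = ₂F₁ (N : ℝ) b c z := by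
  rw [ordinaryHypergeometric_eq_tsum_hypergeomTerm]
  refine tsum_congr fun k ↦ ?_
  simp only [hypergeomTerm, ordinaryHypergeometricCoefficient, div_eq_mul_inv, mul_inv]
  ring

/-- Lemma 1 of the paper: for `−1 < b < 0`, `c > 0` and `−1 < z < 0`, the
hypergeometric series `F(N) = ∑_k (N)_k (b)_k z^k / ((c)_k k!)` is strictly increasing in
the positive integer `N`: `F(N+1) > F(N)`. -/
theorem hypergeomF_strict_mono
    (b c z : ℝ) (hb0 : -1 < b) (hb1 : b < 0) (hc : 0 < c) (hz0 : -1 < z) (hz1 : z < 0) :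
    ∀ N : ℕ, 0 < N → hypergeomF N b c z < hypergeomF (N + 1) b c z := by
  intro N _
  have hz : |z| < 1 := abs_lt.2 ⟨hz0, by linarith⟩
  have hF : 0 < ₂F₁ ((N : ℝ) + 1) (b + 1) (c + 1) z := by
    simpa using ordinaryHypergeometric_natCast_pos (abs_le.2 ⟨by linarith, by linarith⟩) hz0 hz1.le
      (N + 1) (c + 1) (by linarith)
  rw [hypergeomF_eq_ordinaryHypergeometric, hypergeomF_eq_ordinaryHypergeometric, ← sub_pos,
    Nat.cast_succ, ordinaryHypergeometric_add_one_sub _ _ hz]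
  exact mul_pos (div_pos (mul_pos_of_neg_of_neg hb1 hz1) hc) hF
end

section
/- Let α > 2 and τ > 0 be real and let N_a be a positive integer. For positive integers N with 1 ≤ N ≤ N_a define w(N) := ω(N, α, τ/(N_a − N + 1)), where ω(N,α,t) := 1 + 2·∫_{1}^{∞} x · (1 − (1 + t·x^{−α})^{−N}) dx. Then w is strictly increasing on {1, …, N_a}: w(N) < w(N+1) whenever 1 ≤ N < N_a. -/
open MeasureTheory Set

/-- The interference functional `ω(N, α, t)` of the paper, in integral form. -/
noncomputable def omegaFun (N : ℕ) (α t : ℝ) : ℝ :=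
  1 + 2 * ∫ x in Ioi (1 : ℝ), x * (1 - ((1 + t * x ^ (-α)) ^ N)⁻¹)

lemma one_sub_inv_pow_nonneg (N : ℕ) {u : ℝ} (hu : 0 ≤ u) :
    0 ≤ 1 - ((1 + u) ^ N)⁻¹ := by
  have h1 : (1 : ℝ) ≤ (1 + u) ^ N := one_le_pow₀ (by linarith)
  have h2 : ((1 + u) ^ N)⁻¹ ≤ 1 := inv_le_one_of_one_le₀ h1
  linarith

lemma one_sub_inv_pow_le (N : ℕ) {u : ℝ} (hu : 0 ≤ u) :
    1 - ((1 + u) ^ N)⁻¹ ≤ N * u := by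
  set y : ℝ := (1 + u)⁻¹ with hy
  have hupos : (0:ℝ) < 1 + u := by linarith
  have hy0 : 0 < y := by positivity
  have hy1 : y ≤ 1 := inv_le_one_of_one_le₀ (by linarith)
  have hmul : y * (1 + u) = 1 := inv_mul_cancel₀ (ne_of_gt hupos)
  have hb : 1 + (N : ℝ) * (y - 1) ≤ y ^ N := by
    have h := one_add_mul_le_pow (a := y - 1) (by linarith) N
    rwa [show (1:ℝ) + (y - 1) = y by ring] at h
  have hyN : y ^ N = ((1 + u) ^ N)⁻¹ := by rw [hy, inv_pow]
  -- 1 - y = u * y ≤ u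
  have h1y : 1 - y ≤ u := by nlinarith
  have hN0 : (0:ℝ) ≤ (N:ℝ) := Nat.cast_nonneg N
  nlinarith [mul_le_mul_of_nonneg_left h1y hN0]

lemma integrableOn_aux (α t : ℝ) (hα : 2 < α) (ht : 0 ≤ t) (N : ℕ) :
    IntegrableOn (fun x : ℝ => x * (1 - ((1 + t * x ^ (-α)) ^ N)⁻¹)) (Ioi 1) := by
  have hg : IntegrableOn (fun x : ℝ => (N : ℝ) * t * x ^ (1 - α)) (Ioi 1) := by
    exact (integrableOn_Ioi_rpow_of_lt (by linarith) one_pos).const_mul _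
  apply hg.mono'
  · apply (ContinuousOn.aestronglyMeasurable _ measurableSet_Ioi)
    intro x hx
    have hx0 : (0:ℝ) < x := lt_trans one_pos hx
    apply ContinuousAt.continuousWithinAt
    have h1 : ContinuousAt (fun x : ℝ => x ^ (-α)) x :=
      Real.continuousAt_rpow_const x (-α) (Or.inl (ne_of_gt hx0))
    fun_prop (disch := intros; first | exact ne_of_gt hx0 | positivity)
  · rw [ae_restrict_iff' measurableSet_Ioi]
    filter_upwards with x hx
    have hx0 : (0:ℝ) < x := lt_trans one_pos hx
    have hc : (0:ℝ) < x ^ (-α) := Real.rpow_pos_of_pos hx0 _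
    have hu : (0:ℝ) ≤ t * x ^ (-α) := by positivity
    have h1 := one_sub_inv_pow_nonneg N hu
    have h2 := one_sub_inv_pow_le N hu
    rw [Real.norm_eq_abs, abs_of_nonneg (by positivity)]
    have : x * (1 - ((1 + t * x ^ (-α)) ^ N)⁻¹) ≤ x * ((N:ℝ) * (t * x ^ (-α))) :=
      mul_le_mul_of_nonneg_left h2 (le_of_lt hx0)
    calc x * (1 - ((1 + t * x ^ (-α)) ^ N)⁻¹) ≤ x * ((N:ℝ) * (t * x ^ (-α))) := this
      _ = (N:ℝ) * t * (x ^ (1:ℝ) * x ^ (-α)) := by rw [Real.rpow_one]; ring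
      _ = (N:ℝ) * t * x ^ (1 - α) := by
          rw [← Real.rpow_add hx0]; ring_nf

/-- core of Theorem 2: for `α > 2`, `τ > 0` and a positive integer `Na`, the
map `N ↦ ω(N, α, τ/(Na − N + 1))` is strictly increasing on `{1, …, Na}`. -/
theorem SDMA_interference_functional_increasing
    (α τ : ℝ) (hα : 2 < α) (hτ : 0 < τ) (Na : ℕ) (hNa : 0 < Na) :
    ∀ N : ℕ, 1 ≤ N → N < Na →
      omegaFun N α (τ / ((Na : ℝ) - N + 1)) <
        omegaFun (N + 1) α (τ / ((Na : ℝ) - (N + 1) + 1)) := by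
  intro N hN hNlt
  have hNa_N : (0:ℝ) < (Na:ℝ) - N := by
    have : (N:ℝ) < Na := by exact_mod_cast hNlt
    linarith
  set t := τ / ((Na : ℝ) - N + 1) with ht_def
  set t' := τ / ((Na : ℝ) - (N + 1) + 1) with ht'_def
  have hd : (Na:ℝ) - ((N:ℝ) + 1) + 1 = (Na:ℝ) - N := by ring
  have ht' : t' = τ / ((Na:ℝ) - N) := by rw [ht'_def, hd]
  have ht_pos : 0 < t := div_pos hτ (by linarith)
  have ht'_pos : 0 < t' := by rw [ht']; exact div_pos hτ hNa_N
  have htt' : t < t' := by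
    rw [ht_def, ht']
    exact div_lt_div_of_pos_left hτ hNa_N (by linarith)
  -- the two integrands
  set f := fun x : ℝ => x * (1 - ((1 + t * x ^ (-α)) ^ N)⁻¹) with hf_def
  set g := fun x : ℝ => x * (1 - ((1 + t' * x ^ (-α)) ^ (N+1))⁻¹) with hg_def
  have hfi : IntegrableOn f (Ioi 1) := integrableOn_aux α t hα ht_pos.le N
  have hgi : IntegrableOn g (Ioi 1) := integrableOn_aux α t' hα ht'_pos.le (N+1)
  have hlt : ∀ x ∈ Ioi (1:ℝ), f x < g x := by
    intro x hx
    have hx1 : (1:ℝ) < x := hx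
    have hx0 : (0:ℝ) < x := lt_trans one_pos hx1
    have hc : (0:ℝ) < x ^ (-α) := Real.rpow_pos_of_pos hx0 _
    have hb1 : (0:ℝ) < 1 + t * x ^ (-α) := by nlinarith
    have hb2 : (1:ℝ) < 1 + t' * x ^ (-α) := by nlinarith
    have h1 : (1 + t * x ^ (-α)) ^ N < (1 + t' * x ^ (-α)) ^ N := by
      apply pow_lt_pow_left₀ (by nlinarith) (le_of_lt hb1)
      omega
    have h2 : (1 + t' * x ^ (-α)) ^ N < (1 + t' * x ^ (-α)) ^ (N+1) :=
      pow_lt_pow_right₀ hb2 (Nat.lt_succ_self N)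
    have h3 : ((1 + t' * x ^ (-α)) ^ (N+1))⁻¹ < ((1 + t * x ^ (-α)) ^ N)⁻¹ := by
      apply inv_strictAnti₀ (pow_pos hb1 N)
      linarith
    simp only [hf_def, hg_def]
    apply mul_lt_mul_of_pos_left (by linarith) hx0
  have hsub : IntegrableOn (fun x => g x - f x) (Ioi 1) := hgi.sub hfi
  have hpos : 0 < ∫ x in Ioi (1:ℝ), (g x - f x) := by
    rw [setIntegral_pos_iff_support_of_nonneg_ae _ hsub]
    · have hsupp : Ioi (1:ℝ) ⊆ (Function.support fun x => g x - f x) ∩ Ioi 1 :=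
        fun x hx => ⟨ne_of_gt (sub_pos.mpr (hlt x hx)), hx⟩
      have hle : volume (Ioi (1:ℝ)) ≤
          volume ((Function.support fun x => g x - f x) ∩ Ioi 1) := measure_mono hsupp
      refine lt_of_lt_of_le ?_ hle
      simp [Real.volume_Ioi]
    · exact (ae_restrict_iff' measurableSet_Ioi).mpr
        (ae_of_all _ fun x hx => le_of_lt (sub_pos.mpr (hlt x hx)))
  have heq : ∫ x in Ioi (1:ℝ), (g x - f x) = (∫ x in Ioi (1:ℝ), g x) - ∫ x in Ioi (1:ℝ), f x :=
    integral_sub hgi hfi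
  rw [heq] at hpos
  simp only [omegaFun]
  linarith [hpos]
end

section
/- Let α > 2, τ > 0, and Δh > 0 be real and let N_a be a positive integer. For positive integers N_U with 1 ≤ N_U ≤ N_a, define λ*(N_U) := 1 / ( π·Δh²·( ω(N_U, α, τ/(N_a − N_U + 1)) − 1 ) ), where ω(N,α,t) := 1 + 2·∫_{1}^{∞} x · (1 − (1 + t·x^{−α})^{−N}) dx. Then λ*(1) > λ*(N_U) for every integer N_U with 2 ≤ N_U ≤ N_a. -/
open MeasureTheory Set Real

/-- The critical density `λ*(N_U) = 1/(π Δh² (ω(N_U, α, τ/(Na − N_U + 1)) − 1))`. -/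
noncomputable def criticalDensity (Nu Na : ℕ) (α τ Δh : ℝ) : ℝ :=
  1 / (π * Δh ^ 2 * (omegaFun Nu α (τ / ((Na : ℝ) - Nu + 1)) - 1))

/-!
Passing from `N_U = 1` to `N_U ≥ 2` raises both the exponent `N` and the argument
`t = τ/(N_a − N_U + 1)` of `ω(N, α, t)`, and the integrand `x (1 − (1 + t x^{−α})^{−N})` is
strictly increasing in `t` and nondecreasing in `N`. It is integrable on `(1, ∞)` because
`α > 2` and `1 − (1 + u)^{−N} ≤ N u`, so `ω` strictly increases; since `ω(N, α, 0) = 1`, also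
`ω − 1 > 0`, and `λ*` strictly decreases.
-/

lemma one_sub_inv_one_add_pow_le {u : ℝ} (hu : 0 ≤ u) (N : ℕ) :
    1 - ((1 + u) ^ N)⁻¹ ≤ N * u := by
  have h1u : 0 < 1 + u := by linarith
  -- Bernoulli's inequality for `(1 + u)⁻¹ = 1 - u / (1 + u)`
  have hbern : 1 + N * (-(u / (1 + u))) ≤ (1 + -(u / (1 + u))) ^ N :=
    one_add_mul_le_pow (by linarith [div_le_one_of_le₀ (by linarith : u ≤ 1 + u) h1u.le]) N
  have hinv : 1 + -(u / (1 + u)) = (1 + u)⁻¹ := by field_simp; ring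
  have hfrac : N * (u / (1 + u)) ≤ N * u :=
    mul_le_mul_of_nonneg_left (div_le_self hu (by linarith)) N.cast_nonneg
  rw [hinv, inv_pow] at hbern
  linarith

lemma one_sub_inv_one_add_pow_nonneg {u : ℝ} (hu : 0 ≤ u) (N : ℕ) :
    0 ≤ 1 - ((1 + u) ^ N)⁻¹ :=
  sub_nonneg.2 (inv_le_one_of_one_le₀ (one_le_pow₀ (by linarith)))

lemma setIntegral_lt_setIntegral_of_forall_lt {X : Type*} [MeasurableSpace X] {μ : Measure X}
    {s : Set X} {f g : X → ℝ} (hs : MeasurableSet s) (hμs : μ s ≠ 0)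
    (hf : IntegrableOn f s μ) (hg : IntegrableOn g s μ) (hfg : ∀ x ∈ s, f x < g x) :
    ∫ x in s, f x ∂μ < ∫ x in s, g x ∂μ := by
  have hpos : 0 < ∫ x in s, (g x - f x) ∂μ := by
    rw [setIntegral_pos_iff_support_of_nonneg_ae
      ((ae_restrict_iff' hs).2 (ae_of_all _ fun x hx => (sub_pos.2 (hfg x hx)).le)) (hg.sub hf)]
    have hsupp : s ⊆ Function.support (fun x => g x - f x) ∩ s :=
      fun x hx => ⟨(sub_pos.2 (hfg x hx)).ne', hx⟩
    exact pos_iff_ne_zero.2 fun h => hμs (measure_mono_null hsupp h)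
  rwa [integral_sub hg hf, sub_pos] at hpos

lemma integrableOn_omegaFun_integrand (N : ℕ) {α t : ℝ} (hα : 2 < α) (ht : 0 ≤ t) :
    IntegrableOn (fun x : ℝ => x * (1 - ((1 + t * x ^ (-α)) ^ N)⁻¹)) (Ioi 1) := by
  have hbound : IntegrableOn (fun x : ℝ => N * t * x ^ (1 - α)) (Ioi 1) :=
    (integrableOn_Ioi_rpow_of_lt (by linarith) one_pos).const_mul _
  have hcont : ContinuousOn (fun x : ℝ => x * (1 - ((1 + t * x ^ (-α)) ^ N)⁻¹)) (Ioi 1) := by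
    have hrpow : ContinuousOn (fun x : ℝ => x ^ (-α)) (Ioi 1) :=
      continuousOn_id.rpow_const fun x hx => Or.inl (one_pos.trans hx).ne'
    refine continuousOn_id.mul (continuousOn_const.sub
      (((continuousOn_const.add (continuousOn_const.mul hrpow)).pow N).inv₀ fun x hx => ?_))
    have hu : 0 ≤ t * x ^ (-α) := mul_nonneg ht (rpow_nonneg (one_pos.trans hx).le _)
    exact pow_ne_zero _ (by simp only [Pi.add_apply, Pi.mul_apply]; linarith)
  refine hbound.mono' (hcont.aestronglyMeasurable measurableSet_Ioi) ?_
  filter_upwards [ae_restrict_mem measurableSet_Ioi] with x hx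
  have hx0 : 0 < x := one_pos.trans hx
  have hu : 0 ≤ t * x ^ (-α) := mul_nonneg ht (rpow_nonneg hx0.le _)
  rw [norm_of_nonneg (mul_nonneg hx0.le (one_sub_inv_one_add_pow_nonneg hu N))]
  calc x * (1 - ((1 + t * x ^ (-α)) ^ N)⁻¹) ≤ x * (N * (t * x ^ (-α))) :=
        mul_le_mul_of_nonneg_left (one_sub_inv_one_add_pow_le hu N) hx0.le
    _ = N * t * (x ^ (1 : ℝ) * x ^ (-α)) := by rw [rpow_one]; ring
    _ = N * t * x ^ (1 - α) := by rw [← rpow_add hx0, sub_eq_add_neg]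

lemma one_sub_inv_one_add_pow_lt {u v : ℝ} {M N : ℕ} (hu : 0 ≤ u) (huv : u < v)
    (hM : M ≠ 0) (hMN : M ≤ N) :
    1 - ((1 + u) ^ M)⁻¹ < 1 - ((1 + v) ^ N)⁻¹ := by
  have hlt : (1 + u) ^ M < (1 + v) ^ N :=
    (pow_lt_pow_left₀ (by linarith) (by linarith) hM).trans_le
      (pow_le_pow_right₀ (by linarith) hMN)
  have := inv_strictAnti₀ (by positivity) hlt
  linarith

lemma omegaFun_zero (N : ℕ) (α : ℝ) : omegaFun N α 0 = 1 := by
  simp [omegaFun]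

lemma omegaFun_lt_omegaFun {M N : ℕ} {α s t : ℝ} (hα : 2 < α) (hs : 0 ≤ s) (hst : s < t)
    (hM : M ≠ 0) (hMN : M ≤ N) :
    omegaFun M α s < omegaFun N α t := by
  unfold omegaFun
  gcongr 1 + 2 * ?_
  refine setIntegral_lt_setIntegral_of_forall_lt measurableSet_Ioi (by simp)
    (integrableOn_omegaFun_integrand M hα hs)
    (integrableOn_omegaFun_integrand N hα (hs.trans hst.le)) fun x hx => ?_
  have hx0 : (0 : ℝ) < x := one_pos.trans hx
  have hpow : 0 < x ^ (-α) := rpow_pos_of_pos hx0 _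
  exact mul_lt_mul_of_pos_left (one_sub_inv_one_add_pow_lt (mul_nonneg hs hpow.le)
    (mul_lt_mul_of_pos_right hst hpow) hM hMN) hx0

lemma one_lt_omegaFun {N : ℕ} {α t : ℝ} (hα : 2 < α) (ht : 0 < t) (hN : N ≠ 0) :
    1 < omegaFun N α t :=
  omegaFun_zero N α ▸ omegaFun_lt_omegaFun hα le_rfl ht hN le_rfl

theorem SU_BF_maximizes_critical_density_general
    (α τ Δh : ℝ) (hα : 2 < α) (hτ : 0 < τ) (hΔh : 0 < Δh) (Na : ℕ) :
    ∀ Nu : ℕ, 2 ≤ Nu → Nu ≤ Na →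
      criticalDensity Nu Na α τ Δh < criticalDensity 1 Na α τ Δh := by
  intro Nu h2 hle
  have hNu : (2 : ℝ) ≤ Nu := by exact_mod_cast h2
  have hNuNa : (Nu : ℝ) ≤ Na := by exact_mod_cast hle
  have hτ_pos : 0 < τ / ((Na : ℝ) - (1 : ℕ) + 1) := by
    rw [Nat.cast_one, sub_add_cancel]
    exact div_pos hτ (by linarith)
  have hτ_lt : τ / ((Na : ℝ) - (1 : ℕ) + 1) < τ / ((Na : ℝ) - Nu + 1) := by
    rw [Nat.cast_one, sub_add_cancel]
    exact div_lt_div_of_pos_left hτ (by linarith) (by linarith)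
  have hω_lt := omegaFun_lt_omegaFun (M := 1) (N := Nu) hα hτ_pos.le hτ_lt one_ne_zero (by omega)
  have hω_pos := sub_pos.2 (one_lt_omegaFun hα hτ_pos one_ne_zero)
  unfold criticalDensity
  apply one_div_lt_one_div_of_lt (by positivity)
  gcongr

/-- Theorem 2 of the paper: for `α > 2`, `τ > 0`, `Δh > 0` and a positive
integer `Na`, single-user beamforming (`N_U = 1`) achieves a strictly larger critical
density than SDMA or full SDMA with `2 ≤ N_U ≤ Na`. -/
theorem SU_BF_maximizes_critical_density
    (α τ Δh : ℝ) (hα : 2 < α) (hτ : 0 < τ) (hΔh : 0 < Δh) (Na : ℕ) (hNa : 0 < Na) :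
    ∀ Nu : ℕ, 2 ≤ Nu → Nu ≤ Na →
      criticalDensity Nu Na α τ Δh < criticalDensity 1 Na α τ Δh :=
  SU_BF_maximizes_critical_density_general α τ Δh hα hτ hΔh Na
end
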